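/- arXiv:1408.3195 — 3 statements merged into one kernel-verified Lean document; each statement's English description precedes it below -/
import Mathlib

section
/- Let q, p ∈ ℝ² be distinct points, θ the angle of arrival at p of a signal from q reflected once off a flat scatterer with orientation angle γ (so the reflection point r lies on the ray from p with direction (cos θ, sin θ), and the path q→r→p satisfies the law of reflection at a line of direction angle γ). Then the total path length d = |q - r| + |r - p| satisfies d = (1/cos(θ - γ)) · (cos γ, sin γ)ᵀ (q - p). -/
/-!
Unfolding the reflection at `r` turns the broken path `q → r → p` into the straight segment
from `p` to the mirror image of `q`, of length `s`. The reflection fixes the component along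
the scatterer direction `u = (cos γ, sin γ)`, so `⟪u, q - p⟫ = ⟪u, s • (cos θ, sin θ)⟫
= s cos (θ - γ)`.
-/

/-- The point of `EuclideanSpace ℝ (Fin 2)` with coordinates `a`, `b`. -/
noncomputable def vec2 (a b : ℝ) : EuclideanSpace ℝ (Fin 2) :=
  (WithLp.equiv 2 (Fin 2 → ℝ)).symm ![a, b]

/-- Reflection of a vector of ℝ² across the line through the origin with
direction angle `γ` (measured from the horizontal). -/
noncomputable def reflDir (γ : ℝ) (v : EuclideanSpace ℝ (Fin 2)) : EuclideanSpace ℝ (Fin 2) :=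
  vec2 (Real.cos (2 * γ) * v 0 + Real.sin (2 * γ) * v 1)
       (Real.sin (2 * γ) * v 0 - Real.cos (2 * γ) * v 1)

open Real

@[simp]
lemma vec2_apply_zero (a b : ℝ) : vec2 a b 0 = a := rfl

@[simp]
lemma vec2_apply_one (a b : ℝ) : vec2 a b 1 = b := rfl

lemma inner_vec2_left (a b : ℝ) (v : EuclideanSpace ℝ (Fin 2)) :
    inner ℝ (vec2 a b) v = a * v 0 + b * v 1 := by
  simp [EuclideanSpace.inner_eq_star_dotProduct, Fin.sum_univ_two, dotProduct, mul_comm]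

lemma norm_sq_fin_two (v : EuclideanSpace ℝ (Fin 2)) : ‖v‖ ^ 2 = v 0 ^ 2 + v 1 ^ 2 := by
  simp [EuclideanSpace.norm_sq_eq, Fin.sum_univ_two]

lemma norm_vec2_cos_sin (θ : ℝ) : ‖vec2 (cos θ) (sin θ)‖ = 1 := by
  rw [← sq_eq_sq₀ (norm_nonneg _) zero_le_one, one_pow, norm_sq_fin_two]
  simp [cos_sq_add_sin_sq]

lemma norm_reflDir (γ : ℝ) (v : EuclideanSpace ℝ (Fin 2)) : ‖reflDir γ v‖ = ‖v‖ := by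
  rw [← sq_eq_sq₀ (norm_nonneg _) (norm_nonneg _), norm_sq_fin_two, norm_sq_fin_two]
  simp only [reflDir, vec2_apply_zero, vec2_apply_one]
  linear_combination (v 0 ^ 2 + v 1 ^ 2) * sin_sq_add_cos_sq (2 * γ)

lemma inner_reflDir (γ : ℝ) (v : EuclideanSpace ℝ (Fin 2)) :
    inner ℝ (vec2 (cos γ) (sin γ)) (reflDir γ v) = inner ℝ (vec2 (cos γ) (sin γ)) v := by
  simp only [inner_vec2_left, reflDir, vec2_apply_zero, vec2_apply_one, cos_two_mul, sin_two_mul]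
  linear_combination 2 * cos γ * v 0 * sin_sq_add_cos_sq γ

lemma inner_vec2_cos_sin (γ θ : ℝ) :
    inner ℝ (vec2 (cos γ) (sin γ)) (vec2 (cos θ) (sin θ)) = cos (θ - γ) := by
  rw [inner_vec2_left, cos_sub]
  simp only [vec2_apply_zero, vec2_apply_one]
  ring

theorem stmt0_general (q p r : EuclideanSpace ℝ (Fin 2)) (θ γ t s : ℝ)
    (hcos : Real.cos (θ - γ) ≠ 0)
    (ht : 0 ≤ t)
    (hr : r = p + t • vec2 (Real.cos θ) (Real.sin θ))
    (hts : t ≤ s)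
    (hrefl : r + reflDir γ (q - r) = p + s • vec2 (Real.cos θ) (Real.sin θ)) :
    ‖q - r‖ + ‖r - p‖ =
      (1 / Real.cos (θ - γ)) * (Real.cos γ * (q - p) 0 + Real.sin γ * (q - p) 1) := by
  set e := vec2 (cos θ) (sin θ)
  set u := vec2 (cos γ) (sin γ)
  have hrp : r - p = t • e := by rw [hr]; abel
  have hqr : reflDir γ (q - r) = (s - t) • e := by
    calc reflDir γ (q - r) = (r + reflDir γ (q - r)) - r := by abel
      _ = (s - t) • e := by rw [hrefl, hr]; module
  have hlen : ‖q - r‖ + ‖r - p‖ = s := by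
    rw [← norm_reflDir γ, hqr, hrp, norm_smul, norm_smul, norm_vec2_cos_sin,
      Real.norm_of_nonneg (sub_nonneg.2 hts), Real.norm_of_nonneg ht]
    ring
  have hproj : cos γ * (q - p) 0 + sin γ * (q - p) 1 = s * cos (θ - γ) := by
    calc cos γ * (q - p) 0 + sin γ * (q - p) 1
        = inner ℝ u (reflDir γ (q - r)) + inner ℝ u (r - p) := by
          rw [inner_reflDir, ← inner_add_right, sub_add_sub_cancel, inner_vec2_left]
      _ = s * cos (θ - γ) := by
          rw [hqr, hrp, inner_smul_right, inner_smul_right, inner_vec2_cos_sin]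
          ring
  rw [hlen, hproj]
  field_simp

/-- Single-bounce reflection path length formula:
`d = (1/cos(θ-γ)) ⬝ (cos γ, sin γ)ᵀ (q - p)`. The reflection point `r` lies on the ray
from `p` with direction `(cos θ, sin θ)`, and the law of reflection at the scatterer line
of direction angle `γ` through `r` is expressed by requiring the mirror image of `q`
across that line to lie on the same ray, beyond `r`. -/
theorem stmt0 (q p r : EuclideanSpace ℝ (Fin 2)) (θ γ t s : ℝ)
    (hqp : q ≠ p)
    (hcos : Real.cos (θ - γ) ≠ 0)
    (ht : 0 ≤ t)
    (hr : r = p + t • vec2 (Real.cos θ) (Real.sin θ))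
    (hts : t ≤ s)
    (hrefl : r + reflDir γ (q - r) = p + s • vec2 (Real.cos θ) (Real.sin θ)) :
    ‖q - r‖ + ‖r - p‖ =
      (1 / Real.cos (θ - γ)) * (Real.cos γ * (q - p) 0 + Real.sin γ * (q - p) 1) :=
  stmt0_general q p r θ γ t s hcos ht hr hts hrefl
end

section
/- Let J = I_N - (1/N)11ᵀ and let W be an N×N matrix with W1 = 1. If the spectral norm ρ of the symmetric matrix Wᵀ J W satisfies ρ < 1, then for every s ∈ ℝᴺ, ‖J W s‖² ≤ ρ · ‖J s‖², so the Euclidean norm of the disagreement vector contracts by factor √ρ under application of W. -/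
/-!
Since `W 1 = 1` and `J 1 = 0`, we have `J W J = J W`; and `J` is a symmetric idempotent, so
`‖J W s‖² = ‖J W (J s)‖² = (J s)ᵀ (Wᵀ J W) (J s)`, to which the Rayleigh-quotient bound applies
with `v = J s`, giving `ρ ‖J s‖²`.
-/

open scoped Matrix

/-- The centering projection `J = I - (1/N)·11ᵀ` on `ℝᴺ`. -/
noncomputable def centering (N : ℕ) : Matrix (Fin N) (Fin N) ℝ :=
  1 - ((N : ℝ)⁻¹) • Matrix.of (fun _ _ => (1 : ℝ))

open Matrix

lemma dotProduct_transpose_mul_mul_mulVec {R m n : Type*} [CommSemiring R] [Fintype m]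
    [Fintype n] (W : Matrix m n R) (A : Matrix m m R) (v : n → R) :
    v ⬝ᵥ (Wᵀ * A * W) *ᵥ v = (W *ᵥ v) ⬝ᵥ A *ᵥ (W *ᵥ v) := by
  rw [← mulVec_mulVec, ← mulVec_mulVec, dotProduct_mulVec, vecMul_transpose]

namespace centering

variable {N : ℕ}

lemma mulVec_eq (v : Fin N → ℝ) :
    centering N *ᵥ v = v - ((N : ℝ)⁻¹ * ∑ j, v j) • fun _ => 1 := by
  rw [centering, sub_mulVec, one_mulVec, smul_mulVec]
  ext i
  simp [mulVec, dotProduct]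

lemma mulVec_one : centering N *ᵥ (fun _ => 1) = 0 := by
  ext i
  have hN : (N : ℝ) ≠ 0 := Nat.cast_ne_zero.mpr (Fin.pos i).ne'
  simp [mulVec_eq, hN]

lemma mulVec_smul_one (c : ℝ) : centering N *ᵥ (c • fun _ => 1) = 0 := by
  rw [mulVec_smul, mulVec_one, smul_zero]

lemma transpose_eq : (centering N)ᵀ = centering N := by
  ext i j
  simp [centering, one_apply, eq_comm]

lemma mulVec_mulVec_self (v : Fin N → ℝ) :
    centering N *ᵥ (centering N *ᵥ v) = centering N *ᵥ v := by
  conv_lhs => rw [mulVec_eq v, mulVec_sub, mulVec_smul_one, sub_zero]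

lemma dotProduct_mulVec_self (u : Fin N → ℝ) :
    (centering N *ᵥ u) ⬝ᵥ (centering N *ᵥ u) = u ⬝ᵥ (centering N *ᵥ u) := by
  rw [dotProduct_mulVec, ← transpose_eq, vecMul_transpose, transpose_eq,
    mulVec_mulVec_self, dotProduct_comm]

lemma mulVec_mulVec_centering {W : Matrix (Fin N) (Fin N) ℝ}
    (hrow : W *ᵥ (fun _ => 1) = fun _ => 1) (s : Fin N → ℝ) :
    centering N *ᵥ (W *ᵥ (centering N *ᵥ s)) = centering N *ᵥ (W *ᵥ s) := by
  rw [mulVec_eq s, mulVec_sub, mulVec_smul, hrow, mulVec_sub, mulVec_smul_one, sub_zero]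

end centering

theorem stmt6_general (N : ℕ) (W : Matrix (Fin N) (Fin N) ℝ)
    (hrow : W.mulVec (fun _ => 1) = fun _ => 1)
    (ρ : ℝ)
    (hρ : ∀ v : Fin N → ℝ,
      v ⬝ᵥ (W.transpose * centering N * W).mulVec v ≤ ρ * (v ⬝ᵥ v))
    (s : Fin N → ℝ) :
    ((centering N).mulVec (W.mulVec s)) ⬝ᵥ ((centering N).mulVec (W.mulVec s)) ≤
      ρ * (((centering N).mulVec s) ⬝ᵥ ((centering N).mulVec s)) := by
  calc (centering N *ᵥ (W *ᵥ s)) ⬝ᵥ (centering N *ᵥ (W *ᵥ s))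
      = (W *ᵥ (centering N *ᵥ s)) ⬝ᵥ centering N *ᵥ (W *ᵥ (centering N *ᵥ s)) := by
        rw [← centering.mulVec_mulVec_centering hrow s, centering.dotProduct_mulVec_self]
    _ = (centering N *ᵥ s) ⬝ᵥ (Wᵀ * centering N * W) *ᵥ (centering N *ᵥ s) :=
        (dotProduct_transpose_mul_mul_mulVec _ _ _).symm
    _ ≤ ρ * ((centering N *ᵥ s) ⬝ᵥ (centering N *ᵥ s)) := hρ _

/-- If `W 1 = 1` and the spectral norm `ρ` of the symmetric PSD matrix `Wᵀ J W`
(characterized by the Rayleigh-quotient bound `vᵀ (Wᵀ J W) v ≤ ρ ‖v‖²`) satisfies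
`ρ < 1`, then `‖J W s‖² ≤ ρ ‖J s‖²`: the disagreement vector contracts by `√ρ`. -/
theorem stmt6 (N : ℕ) (W : Matrix (Fin N) (Fin N) ℝ)
    (hrow : W.mulVec (fun _ => 1) = fun _ => 1)
    (ρ : ℝ)
    (hρ : ∀ v : Fin N → ℝ,
      v ⬝ᵥ (W.transpose * centering N * W).mulVec v ≤ ρ * (v ⬝ᵥ v))
    (hρ1 : ρ < 1)
    (s : Fin N → ℝ) :
    ((centering N).mulVec (W.mulVec s)) ⬝ᵥ ((centering N).mulVec (W.mulVec s)) ≤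
      ρ * (((centering N).mulVec s) ⬝ᵥ ((centering N).mulVec s)) :=
  stmt6_general N W hrow ρ hρ s
end

section
/- Let (x_n) be a sequence in ℝᵈ satisfying x_n = x_{n-1} + λ_n(v_n - x_{n-1}) where λ_n ∈ [0,1], ∑λ_n = ∞, and (v_n) is bounded with v_n → v*. Then x_n → v*. -/
/-!
By convexity of the norm, the error `e n = ‖x n - v*‖` obeys
`e (n+1) ≤ (1 - λ) e n + λ ‖v (n+1) - v*‖`. Once `‖v - v*‖ < ε`, the excess `e - ε` is
multiplied at each step by `1 - λ ≤ exp (-λ)`, so it is eventually bounded by `exp (-∑ λ)`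
times its value at the tail index, which tends to `0` because `∑ λ = ∞`.
-/

open Filter Finset Topology

theorem prod_one_sub_le_exp_neg_sum {ι : Type*} (s : Finset ι) (t : ι → ℝ)
    (ht : ∀ i ∈ s, t i ≤ 1) : ∏ i ∈ s, (1 - t i) ≤ Real.exp (-∑ i ∈ s, t i) := by
  rw [← sum_neg_distrib, Real.exp_sum]
  exact prod_le_prod (fun i hi => sub_nonneg.2 (ht i hi)) fun i _ => Real.one_sub_le_exp_neg _

theorem tendsto_prod_Ico_one_sub_nhds_zero {t : ℕ → ℝ} (N : ℕ) (ht : ∀ n, t n ≤ 1)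
    (hdiv : Tendsto (fun n => ∑ k ∈ range n, t k) atTop atTop) :
    Tendsto (fun n => ∏ k ∈ Ico N n, (1 - t k)) atTop (𝓝 0) := by
  have hsum : Tendsto (fun n => ∑ k ∈ Ico N n, t k) atTop atTop := by
    refine (tendsto_atTop_add_const_right _ (-∑ k ∈ range N, t k) hdiv).congr' ?_
    filter_upwards [eventually_ge_atTop N] with n hn
    rw [sum_Ico_eq_sub _ hn, sub_eq_add_neg]
  refine tendsto_of_tendsto_of_tendsto_of_le_of_le tendsto_const_nhds
    (Real.tendsto_exp_neg_atTop_nhds_zero.comp hsum) (fun n => ?_) fun n => ?_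
  · exact prod_nonneg fun k _ => sub_nonneg.2 (ht k)
  · exact prod_one_sub_le_exp_neg_sum _ _ fun k _ => ht k

theorem le_prod_Ico_mul_of_le_one_sub_mul {w t : ℕ → ℝ} {N : ℕ} (ht : ∀ n, t n ≤ 1)
    (hw : ∀ n ≥ N, w (n + 1) ≤ (1 - t n) * w n) :
    ∀ n ≥ N, w n ≤ (∏ k ∈ Ico N n, (1 - t k)) * w N := by
  intro n hn
  induction n, hn using Nat.le_induction with
  | base => simp
  | succ n hn ih =>
    rw [prod_Ico_succ_top hn, mul_comm _ (1 - t n), mul_assoc]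
    exact (hw n hn).trans (mul_le_mul_of_nonneg_left ih (sub_nonneg.2 (ht n)))

theorem tendsto_nhds_zero_of_le_one_sub_mul_add {u t b : ℕ → ℝ}
    (ht : ∀ n, t n ∈ Set.Icc (0 : ℝ) 1)
    (hdiv : Tendsto (fun n => ∑ k ∈ range n, t k) atTop atTop) (hb : Tendsto b atTop (𝓝 0))
    (hu0 : ∀ n, 0 ≤ u n) (hu : ∀ n, u (n + 1) ≤ (1 - t n) * u n + t n * b n) :
    Tendsto u atTop (𝓝 0) := by
  refine tendsto_order.2 ⟨fun a ha => .of_forall fun n => ha.trans_le (hu0 n), fun ε hε => ?_⟩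
  have hε2 : 0 < ε / 2 := half_pos hε
  obtain ⟨N, hN⟩ := eventually_atTop.1 (hb.eventually (gt_mem_nhds hε2))
  have hw : ∀ n ≥ N, u (n + 1) - ε / 2 ≤ (1 - t n) * (u n - ε / 2) := fun n hn => by
    nlinarith [hu n, hN n hn, (ht n).1]
  have hP := (tendsto_prod_Ico_one_sub_nhds_zero N (fun n => (ht n).2) hdiv).mul_const
    (u N - ε / 2)
  rw [zero_mul] at hP
  filter_upwards [hP.eventually (gt_mem_nhds hε2), eventually_ge_atTop N] with n hn hNn
  linarith [le_prod_Ico_mul_of_le_one_sub_mul (w := fun n => u n - ε / 2) (fun n => (ht n).2) hw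
    n hNn]

theorem norm_add_smul_sub_sub_le {E : Type*} [SeminormedAddCommGroup E] [NormedSpace ℝ E]
    (x v a : E) {t : ℝ} (ht : t ∈ Set.Icc (0 : ℝ) 1) :
    ‖x + t • (v - x) - a‖ ≤ (1 - t) * ‖x - a‖ + t * ‖v - a‖ := by
  have h : x + t • (v - x) - a = (1 - t) • (x - a) + t • (v - a) := by module
  rw [h]
  refine (norm_add_le _ _).trans_eq ?_
  rw [norm_smul_of_nonneg (sub_nonneg.2 ht.2), norm_smul_of_nonneg ht.1]

theorem tendsto_of_eq_add_smul_sub {E : Type*} [SeminormedAddCommGroup E] [NormedSpace ℝ E]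
    {x v : ℕ → E} {t : ℕ → ℝ} {a : E} (ht : ∀ n, t n ∈ Set.Icc (0 : ℝ) 1)
    (hdiv : Tendsto (fun n => ∑ k ∈ range n, t k) atTop atTop) (hv : Tendsto v atTop (𝓝 a))
    (hx : ∀ n, x (n + 1) = x n + t n • (v n - x n)) : Tendsto x atTop (𝓝 a) := by
  rw [tendsto_iff_norm_sub_tendsto_zero] at hv ⊢
  refine tendsto_nhds_zero_of_le_one_sub_mul_add ht hdiv hv (fun n => norm_nonneg _) fun n => ?_
  rw [hx n]
  exact norm_add_smul_sub_sub_le _ _ _ (ht n)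

theorem tendsto_sum_range_add_one_atTop {t : ℕ → ℝ}
    (hdiv : Tendsto (fun n => ∑ k ∈ range n, t k) atTop atTop) :
    Tendsto (fun n => ∑ k ∈ range n, t (k + 1)) atTop atTop := by
  refine (tendsto_atTop_add_const_right _ (-t 0) (hdiv.comp (tendsto_add_atTop_nat 1))).congr
    fun n => ?_
  simp only [Function.comp_apply, sum_range_succ' t n, add_neg_cancel_right]

theorem stmt16_general (d : ℕ) (x v : ℕ → EuclideanSpace ℝ (Fin d)) (lam : ℕ → ℝ)
    (hlam : ∀ n, lam n ∈ Set.Icc (0 : ℝ) 1)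
    (hdiv : Tendsto (fun N => ∑ n ∈ Finset.range N, lam n) atTop atTop)
    (vstar : EuclideanSpace ℝ (Fin d))
    (hv : Tendsto v atTop (nhds vstar))
    (hrec : ∀ n, x (n + 1) = x n + lam (n + 1) • (v (n + 1) - x n)) :
    Tendsto x atTop (nhds vstar) :=
  tendsto_of_eq_add_smul_sub (fun n => hlam (n + 1)) (tendsto_sum_range_add_one_atTop hdiv)
    (hv.comp (tendsto_add_atTop_nat 1)) hrec

/-- Deterministic stochastic-approximation recursion: if
`x_n = x_{n-1} + λ_n (v_n - x_{n-1})` with `λ_n ∈ [0,1]`, `∑ λ_n = ∞`, and `(v_n)`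
bounded with `v_n → v*`, then `x_n → v*`. -/
theorem stmt16 (d : ℕ) (x v : ℕ → EuclideanSpace ℝ (Fin d)) (lam : ℕ → ℝ)
    (hlam : ∀ n, lam n ∈ Set.Icc (0 : ℝ) 1)
    (hdiv : Tendsto (fun N => ∑ n ∈ Finset.range N, lam n) atTop atTop)
    (C : ℝ) (hbd : ∀ n, ‖v n‖ ≤ C)
    (vstar : EuclideanSpace ℝ (Fin d))
    (hv : Tendsto v atTop (nhds vstar))
    (hrec : ∀ n, x (n + 1) = x n + lam (n + 1) • (v (n + 1) - x n)) :
    Tendsto x atTop (nhds vstar) :=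
  stmt16_general d x v lam hlam hdiv vstar hv hrec
end
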